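/- arXiv:2208.07726 — 8 statements merged into one kernel-verified Lean document; each statement's English description precedes it below -/
import Mathlib

section
/- Let V be a real vector space, B : V × V → ℝ a symmetric bilinear form, S : V → V a linear endomorphism, λ, ε, κ ∈ ℝ, and X₁, X₂, X₃ ∈ V linearly independent vectors such that B(X₁,X₃) = B(X₂,X₂) = ε ≠ 0, B(X₁,X₁) = B(X₁,X₂) = B(X₂,X₃) = B(X₃,X₃) = 0, S X₁ = λ X₁, S X₂ = X₁ + λ X₂, and S X₃ = X₂ + λ X₃. Then the identity κ·(B(X₂,X₂)·X₃ − B(X₂,X₃)·X₂) = B(S X₃, X₂)·S X₂ − B(S X₂, X₂)·S X₃ leads to a contradiction (it cannot hold). -/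
/-- Elimination of 3×3 Jordan blocks: with the antidiagonal metric block
(`B(X₁,X₃)=B(X₂,X₂)=ε≠0`, the other products zero) and the Jordan chain
`SX₁ = λX₁`, `SX₂ = X₁ + λX₂`, `SX₃ = X₂ + λX₃` on linearly independent `X₁,X₂,X₃`,
the Gauss-type identity evaluated on the pair `(X₂,X₃)` is contradictory. -/
theorem stmt_5 (V : Type*) [AddCommGroup V] [Module ℝ V]
    (B : LinearMap.BilinForm ℝ V) (hsymm : ∀ x y : V, B x y = B y x)
    (S : V →ₗ[ℝ] V) (lam eps kap : ℝ)
    (X₁ X₂ X₃ : V) (hli : LinearIndependent ℝ ![X₁, X₂, X₃])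
    (h13 : B X₁ X₃ = eps) (h22 : B X₂ X₂ = eps) (heps : eps ≠ 0)
    (h11 : B X₁ X₁ = 0) (h12 : B X₁ X₂ = 0) (h23 : B X₂ X₃ = 0) (h33 : B X₃ X₃ = 0)
    (hS1 : S X₁ = lam • X₁) (hS2 : S X₂ = X₁ + lam • X₂) (hS3 : S X₃ = X₂ + lam • X₃)
    (hid : kap • (B X₂ X₂ • X₃ - B X₂ X₃ • X₂)
      = B (S X₃) X₂ • S X₂ - B (S X₂) X₂ • S X₃) :
    False := by
  have h32 : B X₃ X₂ = 0 := (hsymm X₃ X₂).trans h23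
  have h21 : B X₂ X₁ = 0 := (hsymm X₂ X₁).trans h12
  have hB3 : B (S X₃) X₂ = eps := by
    rw [hS3]; simp [h22, h32]
  have hB2 : B (S X₂) X₂ = lam * eps := by
    rw [hS2]; simp [h12, h22]
  rw [h22, h23, hB3, hB2, hS2, hS3] at hid
  have key : eps • X₁ + (0:ℝ) • X₂ + (-(kap * eps + lam * lam * eps)) • X₃ = 0 := by
    linear_combination (norm := module) -hid
  have := Fintype.linearIndependent_iff.mp hli
    ![eps, 0, -(kap * eps + lam * lam * eps)] (by
      simpa [Fin.sum_univ_three] using key)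
  exact heps (this 0)
end

section
/- Let V be a real vector space, B : V × V → ℝ a symmetric bilinear form, S : V → V a linear endomorphism, κ ∈ ℝ with κ ≠ 0, m ≥ 3, and X₁, …, X_m ∈ V vectors with B(Xᵢ,Xⱼ) = 0 for i ≠ j, B(Xᵢ,Xᵢ) = εᵢ ∈ {1, −1}, and S Xᵢ = λᵢ Xᵢ with λᵢ ∈ ℝ. If the identity κ·(B(X,X)·Y − B(X,Y)·X) = B(SY,X)·SX − B(SX,X)·SY holds for all X, Y among the vectors X₁, …, X_m, then λ₁ = λ₂ = ⋯ = λ_m and κ = −λ₁². -/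
/-- If `S` is diagonal on `B`-orthonormal vectors `X₁, …, X_m` (`m ≥ 3`,
`B(Xᵢ,Xᵢ) = εᵢ = ±1`, `SXᵢ = λᵢXᵢ`) and the Gauss-type identity
`κ(B(X,X)Y − B(X,Y)X) = B(SY,X)SX − B(SX,X)SY` holds for all `X,Y` among the `Xᵢ`,
with `κ ≠ 0`, then all the `λᵢ` are equal and `κ = −λ₁²`. -/
theorem stmt_6 (V : Type*) [AddCommGroup V] [Module ℝ V]
    (B : LinearMap.BilinForm ℝ V) (hsymm : ∀ x y : V, B x y = B y x)
    (S : V →ₗ[ℝ] V) (kap : ℝ) (hkap : kap ≠ 0)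
    (m : ℕ) (hm : 3 ≤ m)
    (X : Fin m → V) (eps lam : Fin m → ℝ)
    (heps : ∀ i, eps i = 1 ∨ eps i = -1)
    (horth : ∀ i j, i ≠ j → B (X i) (X j) = 0)
    (hdiag : ∀ i, B (X i) (X i) = eps i)
    (hS : ∀ i, S (X i) = lam i • X i)
    (hid : ∀ i j, kap • (B (X i) (X i) • X j - B (X i) (X j) • X i)
      = B (S (X j)) (X i) • S (X i) - B (S (X i)) (X i) • S (X j)) :
    (∀ i j, lam i = lam j) ∧ kap = -(lam ⟨0, by omega⟩) ^ 2 := by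
  have hepsne : ∀ i, eps i ≠ 0 := by
    intro i; rcases heps i with h | h <;> rw [h] <;> norm_num
  have key : ∀ i j, i ≠ j → kap = -(lam i * lam j) := by
    intro i j hij
    have h := hid i j
    rw [hS i, hS j, hdiag i, horth i j hij] at h
    simp only [map_smul, LinearMap.smul_apply, smul_eq_mul,
      horth j i (Ne.symm hij), hdiag i, mul_zero, zero_smul, zero_sub,
      smul_sub, smul_smul] at h
    simp only [smul_zero, sub_zero, zero_mul, zero_smul, zero_sub] at h
    have h2 : ((kap * eps i) + (lam i * eps i * lam j)) • X j = 0 := by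
      rw [add_smul, h]; abel
    have h3 := congrArg (fun v => B (X j) v) h2
    simp only [map_smul, smul_eq_mul, map_zero, hdiag j] at h3
    have h4 : (kap + lam i * lam j) * (eps i * eps j) = 0 := by ring_nf; ring_nf at h3; linarith
    rcases mul_eq_zero.mp h4 with h5 | h5
    · linarith
    · rcases mul_eq_zero.mp h5 with h6 | h6
      · exact absurd h6 (hepsne i)
      · exact absurd h6 (hepsne j)
  have hex : ∀ i j : Fin m, ∃ k, k ≠ i ∧ k ≠ j := by
    intro i j
    have h1 : ({i, j} : Finset (Fin m)).card ≤ 2 := by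
      apply le_trans (Finset.card_insert_le _ _); simp
    have hne : (({i, j} : Finset (Fin m))ᶜ).Nonempty := by
      rw [← Finset.card_pos, Finset.card_compl, Fintype.card_fin]
      omega
    obtain ⟨k, hk⟩ := hne
    simp only [Finset.mem_compl, Finset.mem_insert, Finset.mem_singleton, not_or] at hk
    exact ⟨k, hk.1, hk.2⟩
  have hlamne : ∀ i, lam i ≠ 0 := by
    intro i
    obtain ⟨k, hki, _⟩ := hex i i
    intro h0
    exact hkap (by rw [key i k (Ne.symm hki), h0]; ring)
  have hall : ∀ i j, lam i = lam j := by
    intro i j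
    by_cases hij : i = j
    · rw [hij]
    · obtain ⟨k, hki, hkj⟩ := hex i j
      have h1 := key i k (Ne.symm hki)
      have h2 := key j k (Ne.symm hkj)
      have := hlamne k
      have : lam i * lam k = lam j * lam k := by linarith
      exact mul_right_cancel₀ (hlamne k) this
  refine ⟨hall, ?_⟩
  have h01 : (⟨0, by omega⟩ : Fin m) ≠ ⟨1, by omega⟩ := by
    simp [Fin.ext_iff]
  have := key _ _ h01
  rw [hall ⟨1, by omega⟩ ⟨0, by omega⟩] at this
  rw [this]; ring
end

section
/- Let I ⊆ ℝ be an open interval, c ∈ ℝ, f : ℝ → ℝ twice differentiable on I with f(t) > 0 on I, λ : ℝ → ℝ differentiable on I with λ(t) ≠ 0 on I, and μ : ℝ → ℝ a function on I. Assume that for all t ∈ I: μ(t)·λ(t) = −f''(t)/f(t) and λ(t)² = (c − f'(t)²)/f(t)². Let θ : ℝ → ℝ be differentiable on I with cos(θ(t)) ≠ 0 and tan(θ(t)) = f'(t)/(f(t)·λ(t)) for all t ∈ I. Then θ'(t) = −μ(t) for all t ∈ I. -/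
/-!
Put `g := f λ`. The two structure equations say that `(g, f')` moves on the circle
`g² + f'² = c` and that `θ` is its polar angle measured from the `g`-axis, so `θ' g = f''`;
since also `μ λ f = -f''`, this gives `(θ' + μ) f λ = 0`.
-/

open Filter Topology Real

theorem mul_eq_of_sq_add_sq_eq_of_tan_eq_div {g p θ : ℝ → ℝ} {g' p' θ' c t : ℝ}
    (hg : HasDerivAt g g' t) (hp : HasDerivAt p p' t) (hθ : HasDerivAt θ θ' t)
    (hcos : cos (θ t) ≠ 0) (hg0 : g t ≠ 0)
    (hcircle : ∀ᶠ s in 𝓝 t, g s ^ 2 + p s ^ 2 = c)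
    (htan : ∀ᶠ s in 𝓝 t, tan (θ s) = p s / g s) :
    θ' * g t = p' := by
  have hc : g t ^ 2 + p t ^ 2 = c := hcircle.self_of_nhds
  have hc_pos : 0 < c := hc ▸ by positivity
  have hcircle' : 2 * g t * g' + 2 * p t * p' = 0 := by
    have hsq := ((hg.pow 2).add (hp.pow 2)).unique
      ((hasDerivAt_const t c).congr_of_eventuallyEq hcircle)
    simpa using hsq
  have htan' : 1 / cos (θ t) ^ 2 * θ' = (p' * g t - p t * g') / g t ^ 2 :=
    ((hasDerivAt_tan hcos).comp t hθ).unique ((hp.div hg hg0).congr_of_eventuallyEq htan)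
  have hsec : 1 / cos (θ t) ^ 2 = c / g t ^ 2 := by
    rw [one_div, ← inv_one_add_tan_sq hcos, inv_inv, htan.self_of_nhds, ← hc]
    field_simp
  rw [hsec] at htan'
  field_simp at htan'
  -- `θ' c = p' g - p g'`; multiplying by `g` and using `g g' = -p p'` leaves `θ' c g = p' c`.
  apply mul_left_cancel₀ hc_pos.ne'
  linear_combination g t * htan' - p t * hcircle' / 2 + p' * hc

/-- With `μ·λ = −f''/f` and `λ² = (c − f'²)/f²` on the open interval `I`
(`f > 0`, `λ ≠ 0`, `λ` differentiable), if `tan θ = f'/(f·λ)` with `cos θ ≠ 0`,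
then `θ' = −μ` on `I`. -/
theorem stmt_8 (a b c : ℝ) (f f' f'' lam μ θ θ' : ℝ → ℝ)
    (hf : ∀ t ∈ Set.Ioo a b, HasDerivAt f (f' t) t)
    (hf' : ∀ t ∈ Set.Ioo a b, HasDerivAt f' (f'' t) t)
    (hpos : ∀ t ∈ Set.Ioo a b, 0 < f t)
    (hlamdiff : ∀ t ∈ Set.Ioo a b, DifferentiableAt ℝ lam t)
    (hlam0 : ∀ t ∈ Set.Ioo a b, lam t ≠ 0)
    (hmul : ∀ t ∈ Set.Ioo a b, μ t * lam t = -(f'' t / f t))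
    (hlamsq : ∀ t ∈ Set.Ioo a b, lam t ^ 2 = (c - f' t ^ 2) / f t ^ 2)
    (hθ : ∀ t ∈ Set.Ioo a b, HasDerivAt θ (θ' t) t)
    (hcos : ∀ t ∈ Set.Ioo a b, Real.cos (θ t) ≠ 0)
    (htan : ∀ t ∈ Set.Ioo a b, Real.tan (θ t) = f' t / (f t * lam t)) :
    ∀ t ∈ Set.Ioo a b, θ' t = -μ t := by
  intro t ht
  have hnhds : ∀ᶠ s in 𝓝 t, s ∈ Set.Ioo a b := isOpen_Ioo.mem_nhds ht
  have hcircle : ∀ᶠ s in 𝓝 t, (f s * lam s) ^ 2 + f' s ^ 2 = c := by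
    filter_upwards [hnhds] with s hs
    have hlam := hlamsq s hs
    field_simp [(hpos s hs).ne'] at hlam
    linear_combination hlam
  have hangle := mul_eq_of_sq_add_sq_eq_of_tan_eq_div
    ((hf t ht).fun_mul (hlamdiff t ht).hasDerivAt) (hf' t ht) (hθ t ht) (hcos t ht)
    (mul_ne_zero (hpos t ht).ne' (hlam0 t ht)) hcircle (hnhds.mono htan)
  have hμ := hmul t ht
  field_simp [(hpos t ht).ne'] at hμ
  have hsum : (θ' t + μ t) * (f t * lam t) = 0 := by linear_combination hangle + hμ
  simpa [add_eq_zero_iff_eq_neg, (hpos t ht).ne', hlam0 t ht] using hsum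
end

section
/- Let I ⊆ ℝ be an open interval, c ∈ ℝ, f : ℝ → ℝ twice differentiable on I with f(t) > 0 on I, λ : ℝ → ℝ differentiable on I with λ(t) ≠ 0 on I, satisfying f(t)²λ(t)² + f'(t)² = c for all t ∈ I. Let θ : ℝ → ℝ be differentiable on I with cos(θ(t)) ≠ 0 and tan(θ(t)) = f'(t)/(f(t)·λ(t)) for all t ∈ I. Then the function t ↦ cos(θ(t))/λ(t) is differentiable on I and its derivative equals sin(θ(t)) for all t ∈ I. -/
/-!
From `tan θ = f'/(fλ)` and `sin² θ + cos² θ = 1` one gets `c cos² θ = f²λ²`, i.e.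
`g := cos θ/λ` satisfies `g² = f²/c`. Differentiating, `2 g g' = 2 f f'/c`, so
`g'/g = f'/f`, and `g f'/f = f' cos θ/(fλ) = sin θ` by the tangent relation again.
-/

open Filter Topology Real

theorem hasDerivAt_of_sq_eventuallyEq_const_mul_sq {f g : ℝ → ℝ} {f' k t : ℝ}
    (hg : DifferentiableAt ℝ g t) (hg0 : g t ≠ 0) (hf : HasDerivAt f f' t) (hf0 : f t ≠ 0)
    (hgf : ∀ᶠ s in 𝓝 t, g s ^ 2 = k * f s ^ 2) :
    HasDerivAt g (g t * f' / f t) t := by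
  have hsq_g : HasDerivAt (fun s => g s ^ 2) (2 * g t * deriv g t) t := by
    simpa using hg.hasDerivAt.fun_pow 2
  have hsq_f : HasDerivAt (fun s => k * f s ^ 2) (k * (2 * f t * f')) t := by
    simpa using (hf.pow 2).const_mul k
  have hderiv : 2 * g t * deriv g t = k * (2 * f t * f') :=
    hsq_g.unique (hsq_f.congr_of_eventuallyEq hgf)
  have hgf_t : g t ^ 2 = k * f t ^ 2 := hgf.self_of_nhds
  refine hg.hasDerivAt.congr_deriv ?_
  rw [eq_div_iff hf0]
  refine mul_left_cancel₀ (mul_ne_zero two_ne_zero hg0) ?_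
  linear_combination f t * hderiv - 2 * f' * hgf_t

theorem Real.sin_mul_eq_of_tan_eq {x p q : ℝ} (hcos : cos x ≠ 0) (hq : q ≠ 0)
    (h : tan x = p / q) : sin x * q = p * cos x := by
  rwa [tan_eq_sin_div_cos, div_eq_div_iff hcos hq] at h

theorem Real.cos_sq_mul_eq_of_tan_eq {x p q : ℝ} (hcos : cos x ≠ 0) (hq : q ≠ 0)
    (h : tan x = p / q) : cos x ^ 2 * (q ^ 2 + p ^ 2) = q ^ 2 := by
  have hsin := sin_mul_eq_of_tan_eq hcos hq h
  linear_combination (-(sin x * q) - p * cos x) * hsin + q ^ 2 * sin_sq_add_cos_sq x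

theorem stmt_9_general (a b c : ℝ) (f f' lam θ : ℝ → ℝ)
    (hf : ∀ t ∈ Set.Ioo a b, HasDerivAt f (f' t) t)
    (hpos : ∀ t ∈ Set.Ioo a b, 0 < f t)
    (hlamdiff : ∀ t ∈ Set.Ioo a b, DifferentiableAt ℝ lam t)
    (hlam0 : ∀ t ∈ Set.Ioo a b, lam t ≠ 0)
    (hrel : ∀ t ∈ Set.Ioo a b, f t ^ 2 * lam t ^ 2 + f' t ^ 2 = c)
    (hθdiff : ∀ t ∈ Set.Ioo a b, DifferentiableAt ℝ θ t)
    (hcos : ∀ t ∈ Set.Ioo a b, Real.cos (θ t) ≠ 0)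
    (htan : ∀ t ∈ Set.Ioo a b, Real.tan (θ t) = f' t / (f t * lam t)) :
    ∀ t ∈ Set.Ioo a b,
      HasDerivAt (fun s => Real.cos (θ s) / lam s) (Real.sin (θ t)) t := by
  intro t ht
  have hfl : ∀ s ∈ Set.Ioo a b, f s * lam s ≠ 0 := fun s hs =>
    mul_ne_zero (hpos s hs).ne' (hlam0 s hs)
  have hsq : ∀ s ∈ Set.Ioo a b, (cos (θ s) / lam s) ^ 2 = c⁻¹ * f s ^ 2 := by
    intro s hs
    have key := cos_sq_mul_eq_of_tan_eq (hcos s hs) (hfl s hs) (htan s hs)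
    rw [mul_pow, hrel s hs] at key
    have hc : c ≠ 0 := by
      rintro rfl
      simp [hpos s hs |>.ne', hlam0 s hs] at key
    field_simp [hlam0 s hs]
    linear_combination key
  have hsin : sin (θ t) = cos (θ t) / lam t * f' t / f t := by
    have := sin_mul_eq_of_tan_eq (hcos t ht) (hfl t ht) (htan t ht)
    field_simp [hlam0 t ht, (hpos t ht).ne']
    linear_combination this
  rw [hsin]
  exact hasDerivAt_of_sq_eventuallyEq_const_mul_sq
    ((hθdiff t ht).cos.div (hlamdiff t ht) (hlam0 t ht)) (div_ne_zero (hcos t ht) (hlam0 t ht))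
    (hf t ht) (hpos t ht).ne' (eventually_of_mem (isOpen_Ioo.mem_nhds ht) hsq)

/-- With `f²λ² + f'² = c` on the open interval `I` (`f > 0`, `λ ≠ 0`,
`λ` differentiable) and `tan θ = f'/(f·λ)`, `cos θ ≠ 0`, the function `cos θ/λ` is
differentiable on `I` with derivative `sin θ`. -/
theorem stmt_9 (a b c : ℝ) (f f' f'' lam θ : ℝ → ℝ)
    (hf : ∀ t ∈ Set.Ioo a b, HasDerivAt f (f' t) t)
    (hf' : ∀ t ∈ Set.Ioo a b, HasDerivAt f' (f'' t) t)
    (hpos : ∀ t ∈ Set.Ioo a b, 0 < f t)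
    (hlamdiff : ∀ t ∈ Set.Ioo a b, DifferentiableAt ℝ lam t)
    (hlam0 : ∀ t ∈ Set.Ioo a b, lam t ≠ 0)
    (hrel : ∀ t ∈ Set.Ioo a b, f t ^ 2 * lam t ^ 2 + f' t ^ 2 = c)
    (hθdiff : ∀ t ∈ Set.Ioo a b, DifferentiableAt ℝ θ t)
    (hcos : ∀ t ∈ Set.Ioo a b, Real.cos (θ t) ≠ 0)
    (htan : ∀ t ∈ Set.Ioo a b, Real.tan (θ t) = f' t / (f t * lam t)) :
    ∀ t ∈ Set.Ioo a b,
      HasDerivAt (fun s => Real.cos (θ s) / lam s) (Real.sin (θ t)) t :=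
  stmt_9_general a b c f f' lam θ hf hpos hlamdiff hlam0 hrel hθdiff hcos htan
end

section
/- Let I ⊆ ℝ be an open interval, c ∈ ℝ, f : ℝ → ℝ twice differentiable on I with f(t) > 0 on I, λ : ℝ → ℝ differentiable on I with λ(t) ≠ 0 on I, and μ : ℝ → ℝ a function on I. Assume that for all t ∈ I: μ(t)·λ(t) = f''(t)/f(t) and f(t)²λ(t)² = f'(t)² − c. Let θ : ℝ → ℝ be differentiable on I with tanh(θ(t)) = f'(t)/(f(t)·λ(t)) for all t ∈ I. Then θ'(t) = μ(t) for all t ∈ I. -/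
/-!
Write `g = f λ`. The relations say that `(g, f')` moves on the hyperbola `g² - f'² = -c`, and
`tanh θ = f' / g` makes `θ` its hyperbolic angle, so `(g, f') = r (cosh θ, sinh θ)` with `r` constant
and hence `f'' = g θ'`. Dividing by `g` and comparing with `μ λ = f'' / f` gives `θ' = μ`.
-/

open Filter Topology

theorem Real.hasDerivAt_tanh (x : ℝ) : HasDerivAt Real.tanh (1 - Real.tanh x ^ 2) x := by
  have hcosh : Real.cosh x ≠ 0 := (Real.cosh_pos x).ne'
  have htanh : Real.tanh = fun y => Real.sinh y / Real.cosh y :=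
    funext Real.tanh_eq_sinh_div_cosh
  rw [htanh]
  refine ((Real.hasDerivAt_sinh x).div (Real.hasDerivAt_cosh x) hcosh).congr_deriv ?_
  field_simp

theorem HasDerivAt.mul_deriv_eq_of_sq_eq_sq_sub {g h : ℝ → ℝ} {g' h' c t : ℝ}
    (hg : HasDerivAt g g' t) (hh : HasDerivAt h h' t)
    (hsq : ∀ᶠ s in 𝓝 t, g s ^ 2 = h s ^ 2 - c) :
    g t * g' = h t * h' := by
  have hg2 : HasDerivAt (fun s => g s ^ 2) (2 * g t * g') t := by
    simpa using hg.fun_pow 2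
  have hh2 : HasDerivAt (fun s => h s ^ 2 - c) (2 * h t * h') t := by
    simpa using (hh.fun_pow 2).sub_const c
  linear_combination (hg2.congr_of_eventuallyEq (hsq.mono fun _ hs => hs.symm)).unique hh2 / 2

theorem HasDerivAt.deriv_eq_mul_of_tanh_eq_div {θ g h : ℝ → ℝ} {θ' g' h' c t : ℝ}
    (hθ : HasDerivAt θ θ' t) (hg : HasDerivAt g g' t) (hh : HasDerivAt h h' t) (hgt : g t ≠ 0)
    (htanh : ∀ᶠ s in 𝓝 t, Real.tanh (θ s) = h s / g s)
    (hsq : ∀ᶠ s in 𝓝 t, g s ^ 2 = h s ^ 2 - c) :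
    θ' * g t = h' := by
  have hgg' : g t * g' = h t * h' := hg.mul_deriv_eq_of_sq_eq_sq_sub hh hsq
  have hsqt : g t ^ 2 = h t ^ 2 - c := hsq.self_of_nhds
  have hT : Real.tanh (θ t) = h t / g t := htanh.self_of_nhds
  have hderiv : (1 - Real.tanh (θ t) ^ 2) * θ' = (h' * g t - h t * g') / g t ^ 2 :=
    (((Real.hasDerivAt_tanh _).comp t hθ).congr_of_eventuallyEq
      (htanh.mono fun _ hs => hs.symm)).unique (hh.div hg hgt)
  have hc : c < 0 := by
    have := Real.tanh_sq_lt_one (θ t)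
    rw [hT, div_pow, div_lt_one (by positivity)] at this
    linarith
  rw [hT] at hderiv
  field_simp at hderiv
  -- `hderiv` now reads `-c θ' = g h' - h g'`; multiply by `g` and use `g g' = h h'`.
  refine mul_left_cancel₀ hc.ne (?_ : c * (θ' * g t) = c * h')
  linear_combination (θ' * g t - h') * hsqt - g t * hderiv + h t * hgg'

/-- With `μ·λ = f''/f` and `f²λ² = f'² − c` on the open interval `I`
(`f > 0`, `λ ≠ 0`, `λ` differentiable), if `tanh θ = f'/(f·λ)`, then `θ' = μ` on `I`. -/
theorem stmt_14 (a b c : ℝ) (f f' f'' lam μ θ θ' : ℝ → ℝ)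
    (hf : ∀ t ∈ Set.Ioo a b, HasDerivAt f (f' t) t)
    (hf' : ∀ t ∈ Set.Ioo a b, HasDerivAt f' (f'' t) t)
    (hpos : ∀ t ∈ Set.Ioo a b, 0 < f t)
    (hlamdiff : ∀ t ∈ Set.Ioo a b, DifferentiableAt ℝ lam t)
    (hlam0 : ∀ t ∈ Set.Ioo a b, lam t ≠ 0)
    (hmul : ∀ t ∈ Set.Ioo a b, μ t * lam t = f'' t / f t)
    (hrel : ∀ t ∈ Set.Ioo a b, f t ^ 2 * lam t ^ 2 = f' t ^ 2 - c)
    (hθ : ∀ t ∈ Set.Ioo a b, HasDerivAt θ (θ' t) t)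
    (htanh : ∀ t ∈ Set.Ioo a b, Real.tanh (θ t) = f' t / (f t * lam t)) :
    ∀ t ∈ Set.Ioo a b, θ' t = μ t := by
  intro t ht
  have hI : ∀ᶠ s in 𝓝 t, s ∈ Set.Ioo a b := isOpen_Ioo.mem_nhds ht
  have hft : f t ≠ 0 := (hpos t ht).ne'
  have hangle : θ' t * (f t * lam t) = f'' t :=
    (hθ t ht).deriv_eq_mul_of_tanh_eq_div ((hf t ht).mul (hlamdiff t ht).hasDerivAt) (hf' t ht)
      (mul_ne_zero hft (hlam0 t ht)) (hI.mono htanh)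
      (hI.mono fun s hs => by simp only [Pi.mul_apply, mul_pow]; exact hrel s hs)
  have hμ : μ t * lam t * f t = f'' t := by rw [hmul t ht, div_mul_cancel₀ _ hft]
  exact mul_right_cancel₀ (mul_ne_zero (hlam0 t ht) hft) (by linear_combination hangle - hμ)
end

section
/- Let I ⊆ ℝ be an open interval, c ∈ ℝ, f : ℝ → ℝ twice differentiable on I with f(t) > 0 on I, and λ : ℝ → ℝ differentiable on I with λ(t) ≠ 0 and f(t)²λ(t)² = f'(t)² − c for all t ∈ I. Let θ : ℝ → ℝ be differentiable on I with tanh(θ(t)) = f'(t)/(f(t)·λ(t)) for all t ∈ I. Then the function t ↦ cosh(θ(t))/λ(t) is differentiable on I and its derivative equals sinh(θ(t)) for all t ∈ I. -/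
/-!
Since `cosh² θ · (1 - tanh² θ) = 1`, the relation `f²λ² = f'² - c` forces `c < 0` and
`cosh θ = f |λ| / √(-c)`. As `λ` is continuous and nonzero, its sign is locally constant, so near
each point `cosh θ / λ` is the constant multiple `f · sign λ / √(-c)` of `f`; its derivative
`f' · sign λ / √(-c)` is `tanh θ · cosh θ = sinh θ`.
-/

open Real Filter Topology

theorem ContinuousAt.eventually_sign_eq {X α : Type*} [TopologicalSpace X] [Zero α]
    [LinearOrder α] [TopologicalSpace α] [OrderTopology α] {g : X → α} {t : X}
    (hg : ContinuousAt g t) (ht : g t ≠ 0) :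
    ∀ᶠ s in 𝓝 t, SignType.sign (g s) = SignType.sign (g t) := by
  have := ((continuousAt_sign_of_ne_zero ht).comp hg).tendsto
  rw [nhds_discrete SignType] at this
  exact tendsto_pure.mp this

namespace Real

theorem cosh_sq_mul_one_sub_tanh_sq (x : ℝ) : cosh x ^ 2 * (1 - tanh x ^ 2) = 1 := by
  rw [tanh_eq_sinh_div_cosh]
  field_simp
  linear_combination cosh_sq_sub_sinh_sq x

theorem sinh_eq_tanh_mul_cosh (x : ℝ) : sinh x = tanh x * cosh x := by
  rw [tanh_eq_sinh_div_cosh, div_mul_cancel₀ _ (cosh_pos x).ne']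

section TanhEqDiv

variable {x p q c : ℝ}

theorem cosh_sq_mul_neg_eq_sq_of_tanh_eq_div (hp : p ≠ 0) (htanh : tanh x = q / p)
    (hrel : p ^ 2 = q ^ 2 - c) : cosh x ^ 2 * -c = p ^ 2 := by
  have h := cosh_sq_mul_one_sub_tanh_sq x
  rw [htanh] at h
  field_simp at h
  linear_combination h - cosh x ^ 2 * hrel

theorem cosh_eq_abs_div_sqrt_of_tanh_eq_div (hp : p ≠ 0) (htanh : tanh x = q / p)
    (hrel : p ^ 2 = q ^ 2 - c) : cosh x = |p| / √(-c) := by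
  have hsq := cosh_sq_mul_neg_eq_sq_of_tanh_eq_div hp htanh hrel
  have hc : 0 < -c :=
    (pos_iff_pos_of_mul_pos (hsq ▸ pow_two_pos_of_ne_zero hp)).mp (pow_pos (cosh_pos x) 2)
  rw [eq_div_iff (sqrt_pos.mpr hc).ne']
  refine (pow_left_inj₀ (by positivity) (abs_nonneg p) two_ne_zero).mp ?_
  rw [mul_pow, sq_sqrt hc.le, hsq, sq_abs]

end TanhEqDiv

section TanhEqDivMul

variable {x f l q c : ℝ}

theorem cosh_div_eq_mul_sign_div_sqrt (hf : 0 < f) (hl : l ≠ 0) (htanh : tanh x = q / (f * l))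
    (hrel : f ^ 2 * l ^ 2 = q ^ 2 - c) : cosh x / l = f * (SignType.sign l / √(-c)) := by
  rw [cosh_eq_abs_div_sqrt_of_tanh_eq_div (mul_ne_zero hf.ne' hl) htanh (by rwa [mul_pow]),
    abs_mul, abs_of_pos hf, ← self_mul_sign l]
  field_simp

theorem sinh_eq_mul_sign_div_sqrt (hf : 0 < f) (hl : l ≠ 0) (htanh : tanh x = q / (f * l))
    (hrel : f ^ 2 * l ^ 2 = q ^ 2 - c) : sinh x = q * (SignType.sign l / √(-c)) := by
  have hcosh := cosh_div_eq_mul_sign_div_sqrt hf hl htanh hrel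
  rw [div_eq_iff hl] at hcosh
  rw [sinh_eq_tanh_mul_cosh, htanh, hcosh]
  field_simp

end TanhEqDivMul

end Real

theorem stmt_15_general (a b c : ℝ) (f f' lam θ : ℝ → ℝ)
    (hf : ∀ t ∈ Set.Ioo a b, HasDerivAt f (f' t) t)
    (hpos : ∀ t ∈ Set.Ioo a b, 0 < f t)
    (hlamdiff : ∀ t ∈ Set.Ioo a b, DifferentiableAt ℝ lam t)
    (hlam0 : ∀ t ∈ Set.Ioo a b, lam t ≠ 0)
    (hrel : ∀ t ∈ Set.Ioo a b, f t ^ 2 * lam t ^ 2 = f' t ^ 2 - c)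
    (htanh : ∀ t ∈ Set.Ioo a b, Real.tanh (θ t) = f' t / (f t * lam t)) :
    ∀ t ∈ Set.Ioo a b,
      HasDerivAt (fun s => Real.cosh (θ s) / lam s) (Real.sinh (θ t)) t := by
  intro t ht
  set k : ℝ := SignType.sign (lam t) / √(-c) with hk
  have hquot : (fun s => cosh (θ s) / lam s) =ᶠ[𝓝 t] fun s => f s * k := by
    filter_upwards [isOpen_Ioo.mem_nhds ht,
      (hlamdiff t ht).continuousAt.eventually_sign_eq (hlam0 t ht)] with s hs hsign
    rw [hk, ← hsign]
    exact cosh_div_eq_mul_sign_div_sqrt (hpos s hs) (hlam0 s hs) (htanh s hs) (hrel s hs)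
  have hsinh : sinh (θ t) = f' t * k :=
    sinh_eq_mul_sign_div_sqrt (hpos t ht) (hlam0 t ht) (htanh t ht) (hrel t ht)
  exact (((hf t ht).mul_const k).congr_of_eventuallyEq hquot).congr_deriv hsinh.symm

/-- With `f²λ² = f'² − c` on the open interval `I` (`f > 0`, `λ ≠ 0`,
`λ` differentiable) and `tanh θ = f'/(f·λ)` for differentiable `θ`, the function
`cosh θ/λ` is differentiable on `I` with derivative `sinh θ`. -/
theorem stmt_15 (a b c : ℝ) (f f' f'' lam θ : ℝ → ℝ)
    (hf : ∀ t ∈ Set.Ioo a b, HasDerivAt f (f' t) t)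
    (hf' : ∀ t ∈ Set.Ioo a b, HasDerivAt f' (f'' t) t)
    (hpos : ∀ t ∈ Set.Ioo a b, 0 < f t)
    (hlamdiff : ∀ t ∈ Set.Ioo a b, DifferentiableAt ℝ lam t)
    (hlam0 : ∀ t ∈ Set.Ioo a b, lam t ≠ 0)
    (hrel : ∀ t ∈ Set.Ioo a b, f t ^ 2 * lam t ^ 2 = f' t ^ 2 - c)
    (hθdiff : ∀ t ∈ Set.Ioo a b, DifferentiableAt ℝ θ t)
    (htanh : ∀ t ∈ Set.Ioo a b, Real.tanh (θ t) = f' t / (f t * lam t)) :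
    ∀ t ∈ Set.Ioo a b,
      HasDerivAt (fun s => Real.cosh (θ s) / lam s) (Real.sinh (θ t)) t :=
  stmt_15_general a b c f f' lam θ hf hpos hlamdiff hlam0 hrel htanh
end

section
/- Let I ⊆ ℝ be an open interval, c ∈ ℝ, f : ℝ → ℝ twice differentiable on I with f(t) > 0 and f'(t) ≠ 0 on I, λ : ℝ → ℝ differentiable on I with λ(t) ≠ 0 on I, and μ : ℝ → ℝ a function on I. Assume that for all t ∈ I: μ(t)·λ(t) = f''(t)/f(t) and f(t)²λ(t)² = f'(t)² − c. Let θ : ℝ → ℝ be differentiable on I with sinh(θ(t)) ≠ 0 and cosh(θ(t))/sinh(θ(t)) = f'(t)/(f(t)·λ(t)) for all t ∈ I. Then θ'(t) = μ(t) for all t ∈ I. -/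
/-!
Differentiating `coth θ = f' / (f λ)` gives `-θ' / sinh² θ = (f' / (f λ))'`. Differentiating
`(f λ)² = f'² - c` gives `(f λ)(f λ)' = f' f''`, with which the quotient rule collapses to
`(f' / (f λ))' = -c f'' / (f λ)³`. On the other hand
`1 / sinh² θ = coth² θ - 1 = c / (f λ)²`, which in particular forces `c ≠ 0`; comparing the two
expressions gives `θ' = f'' / (f λ) = μ`.
-/

open Real Filter Topology

theorem cosh_div_sinh_sq_sub_one {x : ℝ} (hx : sinh x ≠ 0) :
    (cosh x / sinh x) ^ 2 - 1 = 1 / sinh x ^ 2 := by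
  field_simp
  linear_combination cosh_sq_sub_sinh_sq x

theorem HasDerivAt.cosh_div_sinh {θ : ℝ → ℝ} {θ' t : ℝ} (hθ : HasDerivAt θ θ' t)
    (hs : Real.sinh (θ t) ≠ 0) :
    HasDerivAt (fun x => Real.cosh (θ x) / Real.sinh (θ x)) (-θ' / Real.sinh (θ t) ^ 2) t := by
  refine (hθ.cosh.fun_div hθ.sinh hs).congr_deriv ?_
  congr 1
  linear_combination -θ' * cosh_sq_sub_sinh_sq (θ t)

theorem HasDerivAt.div_of_sq_eq_sq_sub {u v : ℝ → ℝ} {u' v' c t : ℝ} (hu : HasDerivAt u u' t)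
    (hv : HasDerivAt v v' t) (hvt : v t ≠ 0) (huv : ∀ᶠ x in 𝓝 t, v x ^ 2 = u x ^ 2 - c) :
    HasDerivAt (fun x => u x / v x) (-c * u' / v t ^ 3) t := by
  have hvv' : v t * v' = u t * u' := by
    have h := ((hv.pow 2).unique ((hu.pow 2).sub_const c |>.congr_of_eventuallyEq huv))
    linear_combination h / 2
  refine (hu.fun_div hv hvt).congr_deriv ?_
  rw [div_eq_div_iff (pow_ne_zero 2 hvt) (pow_ne_zero 3 hvt)]
  linear_combination (v t ^ 2 * u') * huv.self_of_nhds - v t ^ 2 * u t * hvv'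

theorem stmt_16_general (a b c : ℝ) (f f' f'' lam μ θ θ' : ℝ → ℝ)
    (hf : ∀ t ∈ Set.Ioo a b, HasDerivAt f (f' t) t)
    (hf' : ∀ t ∈ Set.Ioo a b, HasDerivAt f' (f'' t) t)
    (hpos : ∀ t ∈ Set.Ioo a b, 0 < f t)
    (hlamdiff : ∀ t ∈ Set.Ioo a b, DifferentiableAt ℝ lam t)
    (hlam0 : ∀ t ∈ Set.Ioo a b, lam t ≠ 0)
    (hmul : ∀ t ∈ Set.Ioo a b, μ t * lam t = f'' t / f t)
    (hrel : ∀ t ∈ Set.Ioo a b, f t ^ 2 * lam t ^ 2 = f' t ^ 2 - c)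
    (hθ : ∀ t ∈ Set.Ioo a b, HasDerivAt θ (θ' t) t)
    (hsinh : ∀ t ∈ Set.Ioo a b, Real.sinh (θ t) ≠ 0)
    (hcoth : ∀ t ∈ Set.Ioo a b,
      Real.cosh (θ t) / Real.sinh (θ t) = f' t / (f t * lam t)) :
    ∀ t ∈ Set.Ioo a b, θ' t = μ t := by
  intro t ht
  have hI : Set.Ioo a b ∈ 𝓝 t := isOpen_Ioo.mem_nhds ht
  have hf0 : f t ≠ 0 := (hpos t ht).ne'
  have hlam0t : lam t ≠ 0 := hlam0 t ht
  have hfl0 : f t * lam t ≠ 0 := mul_ne_zero hf0 hlam0t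
  have hquot := (hf' t ht).div_of_sq_eq_sq_sub
    ((hf t ht).fun_mul (hlamdiff t ht).hasDerivAt) hfl0
    (eventually_of_mem hI fun x hx => (mul_pow _ _ 2).trans (hrel x hx))
  have hderiv : -θ' t / sinh (θ t) ^ 2 = -c * f'' t / (f t * lam t) ^ 3 :=
    ((hθ t ht).cosh_div_sinh (hsinh t ht)).unique
      (hquot.congr_of_eventuallyEq (eventuallyEq_of_mem hI hcoth))
  have hsinh_sq : 1 / sinh (θ t) ^ 2 = c / (f t * lam t) ^ 2 := by
    rw [← cosh_div_sinh_sq_sub_one (hsinh t ht), hcoth t ht, div_pow, mul_pow]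
    field_simp
    linear_combination -hrel t ht
  have hc : c ≠ 0 := by
    have h := one_div_ne_zero (pow_ne_zero 2 (hsinh t ht))
    rw [hsinh_sq] at h
    exact left_ne_zero_of_mul h
  have hμ : μ t * (f t * lam t) = f'' t := by
    rw [← mul_assoc, mul_right_comm, hmul t ht, div_mul_cancel₀ _ hf0]
  have hθ' : θ' t * (f t * lam t) = f'' t := by
    rw [div_eq_mul_one_div, hsinh_sq] at hderiv
    field_simp [hc] at hderiv
    linear_combination -hderiv
  exact mul_right_cancel₀ hfl0 (hθ'.trans hμ.symm)

/-- With `μ·λ = f''/f` and `f²λ² = f'² − c` on the open interval `I`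
(`f > 0`, `f' ≠ 0`, `λ ≠ 0`, `λ` differentiable), if `coth θ = cosh θ/sinh θ = f'/(f·λ)`
with `sinh θ ≠ 0`, then `θ' = μ` on `I`. -/
theorem stmt_16 (a b c : ℝ) (f f' f'' lam μ θ θ' : ℝ → ℝ)
    (hf : ∀ t ∈ Set.Ioo a b, HasDerivAt f (f' t) t)
    (hf' : ∀ t ∈ Set.Ioo a b, HasDerivAt f' (f'' t) t)
    (hpos : ∀ t ∈ Set.Ioo a b, 0 < f t)
    (hf'0 : ∀ t ∈ Set.Ioo a b, f' t ≠ 0)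
    (hlamdiff : ∀ t ∈ Set.Ioo a b, DifferentiableAt ℝ lam t)
    (hlam0 : ∀ t ∈ Set.Ioo a b, lam t ≠ 0)
    (hmul : ∀ t ∈ Set.Ioo a b, μ t * lam t = f'' t / f t)
    (hrel : ∀ t ∈ Set.Ioo a b, f t ^ 2 * lam t ^ 2 = f' t ^ 2 - c)
    (hθ : ∀ t ∈ Set.Ioo a b, HasDerivAt θ (θ' t) t)
    (hsinh : ∀ t ∈ Set.Ioo a b, Real.sinh (θ t) ≠ 0)
    (hcoth : ∀ t ∈ Set.Ioo a b,
      Real.cosh (θ t) / Real.sinh (θ t) = f' t / (f t * lam t)) :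
    ∀ t ∈ Set.Ioo a b, θ' t = μ t :=
  stmt_16_general a b c f f' f'' lam μ θ θ' hf hf' hpos hlamdiff hlam0 hmul hrel hθ hsinh hcoth
end

section
/- Let I ⊆ ℝ be an open interval, c ∈ ℝ, f : ℝ → ℝ twice differentiable on I with f(t) > 0 on I, and λ : ℝ → ℝ differentiable on I with λ(t) ≠ 0 and f(t)²λ(t)² = f'(t)² − c for all t ∈ I. Let θ : ℝ → ℝ be differentiable on I with sinh(θ(t)) ≠ 0 and cosh(θ(t))/sinh(θ(t)) = f'(t)/(f(t)·λ(t)) for all t ∈ I. Then the function t ↦ sinh(θ(t))/λ(t) is differentiable on I and its derivative equals cosh(θ(t)) for all t ∈ I. -/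
/-!
Put `g = sinh θ / λ`. Since `coth θ = f'/(fλ)`, the identity `cosh² θ - sinh² θ = 1` turns
`f²λ² = f'² - c` into `f² = c g²` on the interval. Differentiating it gives `c g g' = f f'`,
so `g' = f f' / (c g) = g f' / f`, which is `cosh θ` by the `coth` relation again. Working with
`g²` avoids choosing the sign in `g = ±f/√c`.
-/

open Filter Topology Real

lemma ne_zero_of_cosh_div_sinh_eq_div {x p q : ℝ} (hs : sinh x ≠ 0)
    (h : cosh x / sinh x = p / q) : q ≠ 0 := by
  rintro rfl
  rw [div_zero, div_eq_zero_iff] at h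
  exact h.elim (cosh_pos x).ne' hs

section CothRelation

variable {x c f f' l : ℝ}

lemma cosh_eq_sinh_div_mul_div (hs : sinh x ≠ 0) (h : cosh x / sinh x = f' / (f * l)) :
    cosh x = sinh x / l * f' / f := by
  have hfl := ne_zero_of_cosh_div_sinh_eq_div hs h
  rw [div_eq_div_iff hs hfl] at h
  field_simp [left_ne_zero_of_mul hfl, right_ne_zero_of_mul hfl]
  linear_combination h

lemma sq_eq_mul_sq_sinh_div (hs : sinh x ≠ 0) (hrel : f ^ 2 * l ^ 2 = f' ^ 2 - c)
    (h : cosh x / sinh x = f' / (f * l)) : f ^ 2 = c * (sinh x / l) ^ 2 := by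
  have hfl := ne_zero_of_cosh_div_sinh_eq_div hs h
  rw [div_eq_div_iff hs hfl] at h
  rw [div_pow, mul_div_assoc', eq_div_iff (pow_ne_zero 2 (right_ne_zero_of_mul hfl))]
  linear_combination -(f * l) ^ 2 * cosh_sq_sub_sinh_sq x + (cosh x * (f * l) + f' * sinh x) * h
    - sinh x ^ 2 * hrel

end CothRelation

lemma hasDerivAt_of_sq_eventuallyEq_mul_sq {f g : ℝ → ℝ} {f' c t : ℝ}
    (hf : HasDerivAt f f' t) (hg : DifferentiableAt ℝ g t)
    (hsq : (fun s => f s ^ 2) =ᶠ[𝓝 t] fun s => c * g s ^ 2) (hcg : c * g t ≠ 0) :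
    HasDerivAt g (f t * f' / (c * g t)) t := by
  have h₁ : HasDerivAt (fun s => c * g s ^ 2) (2 * f t * f') t := by
    simpa using (hf.pow 2).congr_of_eventuallyEq hsq.symm
  have h₂ : HasDerivAt (fun s => c * g s ^ 2) (c * (2 * g t * deriv g t)) t := by
    simpa using (hg.hasDerivAt.pow 2).const_mul c
  have hderiv : deriv g t = f t * f' / (c * g t) := by
    rw [eq_div_iff hcg]
    linear_combination h₂.unique h₁ / 2
  exact hderiv ▸ hg.hasDerivAt

theorem stmt_17_general (a b c : ℝ) (f f' lam θ : ℝ → ℝ)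
    (hf : ∀ t ∈ Set.Ioo a b, HasDerivAt f (f' t) t)
    (hlamdiff : ∀ t ∈ Set.Ioo a b, DifferentiableAt ℝ lam t)
    (hrel : ∀ t ∈ Set.Ioo a b, f t ^ 2 * lam t ^ 2 = f' t ^ 2 - c)
    (hθdiff : ∀ t ∈ Set.Ioo a b, DifferentiableAt ℝ θ t)
    (hsinh : ∀ t ∈ Set.Ioo a b, Real.sinh (θ t) ≠ 0)
    (hcoth : ∀ t ∈ Set.Ioo a b,
      Real.cosh (θ t) / Real.sinh (θ t) = f' t / (f t * lam t)) :
    ∀ t ∈ Set.Ioo a b,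
      HasDerivAt (fun s => Real.sinh (θ s) / lam s) (Real.cosh (θ t)) t := by
  intro t ht
  have hsq : (fun s => f s ^ 2) =ᶠ[𝓝 t] fun s => c * (sinh (θ s) / lam s) ^ 2 :=
    eventually_of_mem (isOpen_Ioo.mem_nhds ht) fun s hs =>
      sq_eq_mul_sq_sinh_div (hsinh s hs) (hrel s hs) (hcoth s hs)
  have hfl := ne_zero_of_cosh_div_sinh_eq_div (hsinh t ht) (hcoth t ht)
  have hf0 : f t ≠ 0 := left_ne_zero_of_mul hfl
  have hsqt : f t ^ 2 = c * (sinh (θ t) / lam t) ^ 2 := hsq.self_of_nhds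
  have hcg : c * (sinh (θ t) / lam t) ≠ 0 := by
    intro h0
    exact pow_ne_zero 2 hf0 (by linear_combination hsqt + sinh (θ t) / lam t * h0)
  have hvalue : f t * f' t / (c * (sinh (θ t) / lam t)) = sinh (θ t) / lam t * f' t / f t := by
    rw [div_eq_div_iff hcg hf0]
    linear_combination f' t * hsqt
  rw [cosh_eq_sinh_div_mul_div (hsinh t ht) (hcoth t ht), ← hvalue]
  exact hasDerivAt_of_sq_eventuallyEq_mul_sq (hf t ht)
    ((hθdiff t ht).sinh.div (hlamdiff t ht) (right_ne_zero_of_mul hfl)) hsq hcg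

/-- With `f²λ² = f'² − c` on the open interval `I` (`f > 0`, `λ ≠ 0`,
`λ` differentiable) and `coth θ = cosh θ/sinh θ = f'/(f·λ)` with `sinh θ ≠ 0` for a
differentiable `θ`, the function `sinh θ/λ` is differentiable on `I` with derivative
`cosh θ`. -/
theorem stmt_17 (a b c : ℝ) (f f' f'' lam θ : ℝ → ℝ)
    (hf : ∀ t ∈ Set.Ioo a b, HasDerivAt f (f' t) t)
    (hf' : ∀ t ∈ Set.Ioo a b, HasDerivAt f' (f'' t) t)
    (hpos : ∀ t ∈ Set.Ioo a b, 0 < f t)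
    (hlamdiff : ∀ t ∈ Set.Ioo a b, DifferentiableAt ℝ lam t)
    (hlam0 : ∀ t ∈ Set.Ioo a b, lam t ≠ 0)
    (hrel : ∀ t ∈ Set.Ioo a b, f t ^ 2 * lam t ^ 2 = f' t ^ 2 - c)
    (hθdiff : ∀ t ∈ Set.Ioo a b, DifferentiableAt ℝ θ t)
    (hsinh : ∀ t ∈ Set.Ioo a b, Real.sinh (θ t) ≠ 0)
    (hcoth : ∀ t ∈ Set.Ioo a b,
      Real.cosh (θ t) / Real.sinh (θ t) = f' t / (f t * lam t)) :
    ∀ t ∈ Set.Ioo a b,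
      HasDerivAt (fun s => Real.sinh (θ s) / lam s) (Real.cosh (θ t)) t :=
  stmt_17_general a b c f f' lam θ hf hlamdiff hrel hθdiff hsinh hcoth
end
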